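/- Let Z₂ = ZMod 2 and U(1) = ℚ/ℤ, all actions trivial. The abelian group ⊕_{p=1}^{2} H^{2-p}(Z₂, H^p(Z₂, U(1))), where each inner cohomology group H^p(Z₂, U(1)) is regarded as a Z₂-module with trivial action, is isomorphic to ZMod 2. -/

import Mathlib

/-!
For trivial coefficients `H⁰(G, A) = A` and `H¹(ℤ/n, A) = Hom(ℤ/n, A)` is the `n`-torsion of `A`,
while the positive even cohomology of a finite cyclic group `G` is `A / |G| A` by periodicity.
As `ℚ/ℤ` is divisible with `2`-torsion `{0, 1/2}`, this gives `H¹(ℤ₂, U(1)) ≅ ℤ₂` and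
`H²(ℤ₂, U(1)) = 0`, so the sum is `H¹(ℤ₂, ℤ₂) ⊕ H⁰(ℤ₂, 0)`, a group of order `2`, hence `ℤ₂`.
-/

/-- `U(1)`, the circle group, presented additively as `ℚ/ℤ`. -/
abbrev U1 : Type := AddCircle (1 : ℚ)

abbrev Z2 : Type := Multiplicative (ZMod 2)

open groupCohomology CategoryTheory

theorem Nat.card_addMonoidHom_zmod (n : ℕ) (A : Type*) [AddCommGroup A] :
    Nat.card (ZMod n →+ A) = Nat.card {a : A // n • a = 0} :=
  Nat.card_congr <| (ZMod.lift n).symm.trans <|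
    (zmultiplesHom A).symm.subtypeEquiv fun f => by simp [← map_nsmul]

theorem Multiplicative.mem_zpowers_ofAdd_one {n : ℕ} (x : Multiplicative (ZMod n)) :
    x ∈ Subgroup.zpowers (ofAdd 1) := by
  refine ⟨(toAdd x).cast, ?_⟩
  simp only [← ofAdd_zsmul, zsmul_one, ZMod.intCast_cast, ZMod.cast_id', id, ofAdd_toAdd]

namespace AddCircle

theorem nsmul_surjective {𝕜 : Type*} [Field 𝕜] [CharZero 𝕜] (p : 𝕜) {n : ℕ} (hn : n ≠ 0) :
    Function.Surjective fun u : AddCircle p => n • u := by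
  intro u
  obtain ⟨x, rfl⟩ := QuotientAddGroup.mk_surjective u
  refine ⟨((x / n : 𝕜) : AddCircle p), ?_⟩
  simp only [← coe_nsmul, nsmul_eq_mul, mul_div_cancel₀ _ (Nat.cast_ne_zero.2 hn : (n : 𝕜) ≠ 0)]

theorem card_nsmul_eq_zero {𝕜 : Type*} [Field 𝕜] [LinearOrder 𝕜] [IsStrictOrderedRing 𝕜]
    (p : 𝕜) [Fact (0 < p)] {n : ℕ} (hn : 0 < n) :
    Nat.card {u : AddCircle p // n • u = 0} = n := by
  have torsion_eq :
      {u : AddCircle p | n • u = 0} = AddSubgroup.zmultiples ((p / n : 𝕜) : AddCircle p) := by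
    ext u
    rw [Set.mem_ofPred_eq, SetLike.mem_coe]
    constructor
    · intro hu
      obtain ⟨m, -, rfl⟩ := (AddCircle.nsmul_eq_zero_iff hn).1 hu
      exact ⟨m, by simp [natCast_div_mul_eq_nsmul]⟩
    · rintro ⟨k, rfl⟩
      rw [smul_comm, ← coe_nsmul, nsmul_eq_mul, mul_div_cancel₀ _ (by positivity), coe_period,
        smul_zero]
  calc Nat.card {u : AddCircle p // n • u = 0}
      = Nat.card (AddSubgroup.zmultiples ((p / n : 𝕜) : AddCircle p)) :=
        Nat.card_congr (Equiv.setCongr torsion_eq)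
    _ = n := by rw [Nat.card_zmultiples, addOrderOf_period_div hn]

end AddCircle

section TrivialCoefficients

variable {k : Type} [CommRing k] (A : Type) [AddCommGroup A] [Module k A]

theorem card_groupCohomology_zero_trivial {G : Type} [Group G] :
    Nat.card (groupCohomology (Rep.trivial k G A) 0) = Nat.card A :=
  Nat.card_congr (H0IsoOfIsTrivial (Rep.trivial k G A)).toLinearEquiv.toEquiv

theorem card_groupCohomology_one_trivial_zmod (n : ℕ) :
    Nat.card (groupCohomology (Rep.trivial k (Multiplicative (ZMod n)) A) 1) =
      Nat.card {a : A // n • a = 0} :=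
  (Nat.card_congr (H1IsoOfIsTrivial _).toLinearEquiv.toEquiv).trans (Nat.card_addMonoidHom_zmod n A)

theorem subsingleton_groupCohomology_of_even_of_trivial {G : Type} [CommGroup G] [Fintype G]
    (g : G) (hg : ∀ x, x ∈ Subgroup.zpowers g)
    (hA : Function.Surjective fun a : A => Fintype.card G • a) (i : ℕ) [NeZero i] (hi : Even i) :
    Subsingleton (groupCohomology (Rep.trivial k G A) i) := by
  rw [← ModuleCat.isZero_iff_subsingleton]
  refine Limits.IsZero.of_iso ?_ (Rep.FiniteCyclicGroup.groupCohomologyIsoEven _ g hg i hi)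
  -- the complex is `A --(|G| •)--> A --0--> A`
  rw [← ShortComplex.exact_iff_isZero_homology, ShortComplex.moduleCat_exact_iff]
  intro a _
  obtain ⟨b, rfl⟩ := hA a
  exact ⟨b, by simp [Rep.norm, Representation.norm]⟩

end TrivialCoefficients

/-- The classification `⊕_{p=1}^{2} H^{2-p}(ℤ₂, H^p(ℤ₂, U(1)))` of average SPT phases
for exact symmetry `K = ℤ₂` and average symmetry `G = ℤ₂` in spatial dimension `d = 1`
(all actions trivial) is `ℤ₂` (Table I of the paper; the disordered cluster chain). -/
theorem averageSPT_classification_Z2_Z2_1d :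
    Nonempty (
      DirectSum (Fin 2) (fun p =>
        ↥(groupCohomology
            (Rep.trivial ℤ Z2
              ↥(groupCohomology (Rep.trivial ℤ Z2 U1) (p.val + 1))) (2 - (p.val + 1))))
      ≃+ ZMod 2) := by
  have hH1 : Nat.card (groupCohomology (Rep.trivial ℤ Z2 U1) 1) = 2 := by
    rw [card_groupCohomology_one_trivial_zmod, AddCircle.card_nsmul_eq_zero _ two_pos]
  have hH2 : Subsingleton (groupCohomology (Rep.trivial ℤ Z2 U1) 2) := by
    refine subsingleton_groupCohomology_of_even_of_trivial U1 (Multiplicative.ofAdd (1 : ZMod 2))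
      Multiplicative.mem_zpowers_ofAdd_one ?_ 2 even_two
    rw [Fintype.card_multiplicative, ZMod.card]
    exact AddCircle.nsmul_surjective _ two_ne_zero
  have hβ₀ : Nat.card (groupCohomology
      (Rep.trivial ℤ Z2 (groupCohomology (Rep.trivial ℤ Z2 U1) 1)) 1) = 2 := by
    have two_torsion (b : groupCohomology (Rep.trivial ℤ Z2 U1) 1) : 2 • b = 0 := by
      simpa [hH1] using card_nsmul_eq_zero' (x := b)
    rw [card_groupCohomology_one_trivial_zmod,
      Nat.card_congr (Equiv.subtypeUnivEquiv two_torsion), hH1]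
  have hβ₁ : Nat.card (groupCohomology
      (Rep.trivial ℤ Z2 (groupCohomology (Rep.trivial ℤ Z2 U1) 2)) 0) = 1 := by
    rw [card_groupCohomology_zero_trivial, Nat.card_of_subsingleton 0]
  refine ⟨addEquivOfPrimeCardEq ?_ (Nat.card_zmod 2)⟩
  rw [Nat.card_congr (DirectSum.addEquivProd _).toEquiv, Nat.card_pi, Fin.prod_univ_two]
  exact congrArg₂ (· * ·) hβ₀ hβ₁
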